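/- Let E and F be the 3×3 real matrices E = [[2,0,1],[2,0,2],[2,0,1]] and F = [[2,1,0],[2,1,0],[2,0,1]], and for a 3×3 matrix T = [t_{ij}] let ‖T‖ = ∑_{i,j} |t_{ij}|. Then the joint spectral radius of {E, F}, namely limsup_{n→∞} max{‖T_1 T_2 ⋯ T_n‖^{1/n} : each T_i ∈ {E, F}}, equals √((9 + √105)/2), which is the square root of the spectral radius of the product FE. -/

import Mathlib

open Matrix

/-- The matrix `E = [[2,0,1],[2,0,2],[2,0,1]]`. -/
def matE : Matrix (Fin 3) (Fin 3) ℝ := !![2, 0, 1; 2, 0, 2; 2, 0, 1]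

/-- The matrix `F = [[2,1,0],[2,1,0],[2,0,1]]`. -/
def matF : Matrix (Fin 3) (Fin 3) ℝ := !![2, 1, 0; 2, 1, 0; 2, 0, 1]

/-- The norm `‖T‖ = ∑_{i,j} |t_{ij}|`, the sum of absolute values of the entries. -/
def normSum (T : Matrix (Fin 3) (Fin 3) ℝ) : ℝ := ∑ i, ∑ j, |T i j|

/-!
Let ρ = (9 + √105)/2 and r = √ρ, so that r⁴ = 9r² + 6. Three positive vectors v₀, v₁, v₂ form
an invariant family: each of E, F maps every one of them entrywise below r times one of them.
As E and F are nonnegative, every product of length n then maps v₀ ≥ 1 below rⁿ times a bounded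
vector, so its entry sum is O(rⁿ). Conversely v₀ is a positive eigenvector of EF for r², whence
‖(EF)ᵏ‖ ≥ r²ᵏ. The n-th roots of the maximal norms are thus squeezed to r along the even n. The
spectral radius of FE is the largest root of its characteristic polynomial λ(λ² − 9λ − 6).
-/

open Filter Topology

theorem mulVec_pow_of_mulVec_eq_smul {n R : Type*} [Fintype n] [DecidableEq n] [CommSemiring R]
    {A : Matrix n n R} {x : n → R} {μ : R} (h : A *ᵥ x = μ • x) (k : ℕ) : (A ^ k) *ᵥ x = μ ^ k • x := by
  induction k with
  | zero => simp
  | succ k ih => rw [pow_succ', ← mulVec_mulVec, ih, mulVec_smul, h, smul_smul, pow_succ]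

section NonnegMatrix

variable {n R : Type*} [Fintype n] [CommSemiring R] [LinearOrder R] [IsStrictOrderedRing R]

theorem list_prod_nonneg [DecidableEq n] {l : List (Matrix n n R)}
    (hl : ∀ T ∈ l, ∀ i j, 0 ≤ T i j) (i j : n) : 0 ≤ l.prod i j := by
  induction l generalizing i j with
  | nil => by_cases h : i = j <;> simp [one_apply, h]
  | cons T l ih =>
    rw [List.prod_cons, mul_apply]
    exact Finset.sum_nonneg fun k _ => mul_nonneg (hl T List.mem_cons_self i k)
      (ih (fun S hS => hl S (List.mem_cons_of_mem _ hS)) k j)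

theorem mulVec_mono_of_nonneg {T : Matrix n n R} (hT : ∀ i j, 0 ≤ T i j) {p q : n → R}
    (h : p ≤ q) : T *ᵥ p ≤ T *ᵥ q :=
  fun i => dotProduct_le_dotProduct_of_nonneg_left h (hT i)

theorem exists_list_prod_mulVec_le [DecidableEq n] {S : Set (Matrix n n R)} {P : Set (n → R)}
    {r : R} (hr : 0 ≤ r) (hS : ∀ T ∈ S, ∀ i j, 0 ≤ T i j)
    (hSP : ∀ T ∈ S, ∀ p ∈ P, ∃ q ∈ P, T *ᵥ p ≤ r • q) {l : List (Matrix n n R)}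
    (hl : ∀ T ∈ l, T ∈ S) {v : n → R} (hv : v ∈ P) :
    ∃ q ∈ P, l.prod *ᵥ v ≤ r ^ l.length • q := by
  induction l with
  | nil => exact ⟨v, hv, by simp⟩
  | cons T l ih =>
    have hT : T ∈ S := hl T List.mem_cons_self
    obtain ⟨q, hq, hlq⟩ := ih fun S hS => hl S (List.mem_cons_of_mem _ hS)
    obtain ⟨q', hq', hTq⟩ := hSP T hT q hq
    refine ⟨q', hq', ?_⟩
    calc (T :: l).prod *ᵥ v = T *ᵥ (l.prod *ᵥ v) := by rw [List.prod_cons, mulVec_mulVec]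
      _ ≤ T *ᵥ (r ^ l.length • q) := mulVec_mono_of_nonneg (hS T hT) hlq
      _ = r ^ l.length • T *ᵥ q := mulVec_smul _ _ _
      _ ≤ r ^ l.length • r • q' := smul_le_smul_of_nonneg_left hTq (pow_nonneg hr _)
      _ = r ^ (T :: l).length • q' := by rw [smul_smul, ← pow_succ, List.length_cons]

theorem sum_entries_le_of_mulVec_le {A : Matrix n n R} (hA : ∀ i j, 0 ≤ A i j) {v : n → R}
    (hv : ∀ j, 1 ≤ v j) {b : R} (h : ∀ i, (A *ᵥ v) i ≤ b) :
    ∑ i, ∑ j, A i j ≤ Fintype.card n * b := by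
  have hrow (i : n) : ∑ j, A i j ≤ b :=
    calc ∑ j, A i j ≤ ∑ j, A i j * v j :=
          Finset.sum_le_sum fun j _ => le_mul_of_one_le_right (hA i j) (hv j)
      _ ≤ b := h i
  simpa using Finset.sum_le_sum fun i (_ : i ∈ Finset.univ) => hrow i

theorem le_sum_entries_of_mulVec_eq_smul {A : Matrix n n R} (hA : ∀ i j, 0 ≤ A i j)
    {x : n → R} (hx : 0 ≤ x) (hx0 : x ≠ 0) {μ : R} (h : A *ᵥ x = μ • x) :
    μ ≤ ∑ i, ∑ j, A i j := by
  obtain ⟨j, hj⟩ := Function.ne_iff.1 hx0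
  have : Nonempty n := ⟨j⟩
  obtain ⟨i, hi⟩ := Finite.exists_max x
  have hxi : 0 < x i := ((hx j).lt_of_ne' hj).trans_le (hi j)
  have hrow : μ * x i ≤ (∑ k, A i k) * x i :=
    calc μ * x i = ∑ k, A i k * x k := by simpa [mulVec, dotProduct] using (congrFun h i).symm
      _ ≤ ∑ k, A i k * x i := Finset.sum_le_sum fun k _ => mul_le_mul_of_nonneg_left (hi k) (hA i k)
      _ = (∑ k, A i k) * x i := (Finset.sum_mul ..).symm
  calc μ ≤ ∑ k, A i k := le_of_mul_le_mul_right hrow hxi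
    _ ≤ ∑ i, ∑ j, A i j := Finset.single_le_sum
        (f := fun i => ∑ j, A i j) (fun i _ => Finset.sum_nonneg fun j _ => hA i j)
        (Finset.mem_univ i)

end NonnegMatrix

theorem Filter.limsup_eq_of_eventually_le_of_frequently_ge {α β : Type*}
    [ConditionallyCompleteLinearOrder β] [TopologicalSpace β] [OrderTopology β] {f : Filter α}
    [f.NeBot] {u b : α → β} {r : β}
    (hb : Tendsto b f (𝓝 r)) (hub : ∀ᶠ a in f, u a ≤ b a) (hlb : ∃ᶠ a in f, r ≤ u a)
    (hbdd : IsBoundedUnder (· ≥ ·) f u) : limsup u f = r :=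
  le_antisymm
    ((limsup_le_limsup hub hbdd.isCoboundedUnder_le hb.isBoundedUnder_le).trans_eq hb.limsup_eq)
    (le_limsup_of_frequently_le hlb (hb.isBoundedUnder_le.mono_le hub))

theorem Real.tendsto_const_rpow_one_div_natCast {C : ℝ} (hC : 0 < C) :
    Tendsto (fun n : ℕ => C ^ ((1 : ℝ) / n)) atTop (𝓝 1) := by
  have h := ((Real.continuousAt_const_rpow hC.ne').tendsto).comp
    tendsto_one_div_atTop_nhds_zero_nat
  simpa [Function.comp_def] using h

theorem Real.mul_pow_rpow_one_div {C r : ℝ} (hC : 0 ≤ C) (hr : 0 ≤ r) {n : ℕ} (hn : n ≠ 0) :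
    (C * r ^ n) ^ ((1 : ℝ) / n) = C ^ ((1 : ℝ) / n) * r := by
  rw [Real.mul_rpow hC (pow_nonneg hr n), one_div, Real.pow_rpow_inv_natCast hr hn]

theorem vec3_le {a b c a' b' c' : ℝ} (ha : a ≤ a') (hb : b ≤ b') (hc : c ≤ c') :
    ![a, b, c] ≤ ![a', b', c'] := by
  intro i; fin_cases i <;> assumption

theorem matE_mulVec (x y z : ℝ) : matE *ᵥ ![x, y, z] = ![2 * x + z, 2 * x + 2 * z, 2 * x + z] := by
  ext i; fin_cases i <;> simp [matE, mulVec, dotProduct, Fin.sum_univ_three]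

theorem matF_mulVec (x y z : ℝ) : matF *ᵥ ![x, y, z] = ![2 * x + y, 2 * x + y, 2 * x + z] := by
  ext i; fin_cases i <;> simp [matF, mulVec, dotProduct, Fin.sum_univ_three]

theorem matE_nonneg (i j : Fin 3) : 0 ≤ matE i j := by
  fin_cases i <;> fin_cases j <;> norm_num [matE]

theorem matF_nonneg (i j : Fin 3) : 0 ≤ matF i j := by
  fin_cases i <;> fin_cases j <;> norm_num [matF]

def eigenvecEF (r : ℝ) : Fin 3 → ℝ := ![2 * r ^ 2, r ^ 2 * (r ^ 2 - 7), 2 * r ^ 2]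

-- The members are v₀ = `eigenvecEF r`, v₁ = F v₀ / r and v₂ = F v₁ / r; E maps each of them
-- below r v₀ (with equality for v₁), and F v₂ ≤ r v₂.
def extremalFamily (r : ℝ) : Set (Fin 3 → ℝ) :=
  {eigenvecEF r, ![r * (r ^ 2 - 3), r * (r ^ 2 - 3), 6 * r],
    ![3 * (r ^ 2 - 3), 3 * (r ^ 2 - 3), 2 * r ^ 2]}

def alternatingList (k : ℕ) : List (Matrix (Fin 3) (Fin 3) ℝ) :=
  (List.replicate k [matE, matF]).flatten

theorem alternatingList_length (k : ℕ) : (alternatingList k).length = 2 * k := by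
  simp [alternatingList, mul_comm]

theorem alternatingList_prod (k : ℕ) : (alternatingList k).prod = (matE * matF) ^ k := by
  simp [alternatingList, List.prod_flatten]

theorem mem_alternatingList {k : ℕ} : ∀ T ∈ alternatingList k, T = matE ∨ T = matF := by
  simp [alternatingList]

theorem normSum_nonneg (T : Matrix (Fin 3) (Fin 3) ℝ) : 0 ≤ normSum T :=
  Finset.sum_nonneg fun _ _ => Finset.sum_nonneg fun _ _ => abs_nonneg _

theorem normSum_eq_sum_of_nonneg {T : Matrix (Fin 3) (Fin 3) ℝ} (hT : ∀ i j, 0 ≤ T i j) :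
    normSum T = ∑ i, ∑ j, T i j := by
  simp only [normSum, abs_of_nonneg (hT _ _)]

theorem nonneg_of_mem_matE_matF :
    ∀ T ∈ ({matE, matF} : Set (Matrix (Fin 3) (Fin 3) ℝ)), ∀ i j, 0 ≤ T i j := by
  rintro T (rfl | rfl)
  exacts [matE_nonneg, matF_nonneg]

def productNormRoots (n : ℕ) : Set ℝ :=
  {x : ℝ | ∃ l : List (Matrix (Fin 3) (Fin 3) ℝ), l.length = n ∧
    (∀ T ∈ l, T = matE ∨ T = matF) ∧ x = normSum l.prod ^ ((1 : ℝ) / n)}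

theorem nonneg_of_mem_productNormRoots {n : ℕ} :
    ∀ x ∈ productNormRoots n, 0 ≤ x := by
  rintro x ⟨l, -, -, rfl⟩
  exact Real.rpow_nonneg (normSum_nonneg _) _

section

variable {r : ℝ} (hr : r ^ 4 = 9 * r ^ 2 + 6)
include hr

theorem one_le_eigenvecEF : ∀ j, 1 ≤ eigenvecEF r j := by
  intro j
  fin_cases j <;> simp only [eigenvecEF, Fin.zero_eta, Fin.mk_one, Fin.reduceFinMk, cons_val] <;>
    nlinarith

theorem matE_mul_matF_mulVec_eigenvecEF : (matE * matF) *ᵥ eigenvecEF r = r ^ 2 • eigenvecEF r := by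
  rw [← mulVec_mulVec, eigenvecEF, matF_mulVec, matE_mulVec]
  simp only [smul_cons, smul_eq_mul, smul_empty, vecCons_inj]
  refine ⟨by ring, by linear_combination (-r ^ 2) * hr, by ring, trivial⟩

theorem pow_le_normSum_matE_mul_matF_pow (k : ℕ) : r ^ (2 * k) ≤ normSum ((matE * matF) ^ k) := by
  have hnn : ∀ i j, 0 ≤ ((matE * matF) ^ k) i j := by
    rw [← alternatingList_prod]
    exact list_prod_nonneg fun T hT => nonneg_of_mem_matE_matF T (mem_alternatingList T hT)
  have hv : 0 ≤ eigenvecEF r := fun j => zero_le_one.trans (one_le_eigenvecEF hr j)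
  have hv0 : eigenvecEF r ≠ 0 :=
    Function.ne_iff.2 ⟨0, (zero_lt_one.trans_le (one_le_eigenvecEF hr 0)).ne'⟩
  rw [normSum_eq_sum_of_nonneg hnn, pow_mul]
  exact le_sum_entries_of_mulVec_eq_smul hnn hv hv0
    (mulVec_pow_of_mulVec_eq_smul (matE_mul_matF_mulVec_eigenvecEF hr) k)

variable (hr3 : 3 ≤ r)
include hr3

theorem extremalFamily_step :
    ∀ T ∈ ({matE, matF} : Set (Matrix (Fin 3) (Fin 3) ℝ)), ∀ p ∈ extremalFamily r,
      ∃ q ∈ extremalFamily r, T *ᵥ p ≤ r • q := by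
  have hsq := mul_nonneg (sub_nonneg.2 hr3) (sub_nonneg.2 hr3)
  have hEv₁ : r ^ 3 * (r ^ 2 - 7) = 2 * r ^ 3 + 6 * r := by linear_combination r * hr
  have hEv₀ : 8 * r ^ 2 ≤ r ^ 3 * (r ^ 2 - 7) := by nlinarith
  have hEv₂ : 10 * r ^ 2 - 18 ≤ r ^ 3 * (r ^ 2 - 7) := by nlinarith
  have hFv₂ : 8 * r ^ 2 - 18 ≤ 2 * r ^ 3 := by nlinarith
  simp only [extremalFamily, eigenvecEF, Set.mem_insert_iff, Set.mem_singleton_iff,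
    exists_eq_or_imp, exists_eq_left]
  rintro T (rfl | rfl) p (rfl | rfl | rfl) <;>
    simp only [matE_mulVec, matF_mulVec, smul_cons, smul_eq_mul, smul_empty]
  · left; exact vec3_le (by nlinarith) (by nlinarith) (by nlinarith)
  · left; exact vec3_le (by nlinarith) (by nlinarith) (by nlinarith)
  · left; exact vec3_le (by nlinarith) (by nlinarith) (by nlinarith)
  · right; left; exact vec3_le (by nlinarith) (by nlinarith) (by nlinarith)
  · right; right; exact vec3_le (by nlinarith) (by nlinarith) (by nlinarith)
  · right; right; exact vec3_le (by nlinarith) (by nlinarith) (by nlinarith)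

theorem le_pow_four_of_mem_extremalFamily : ∀ q ∈ extremalFamily r, ∀ i, q i ≤ r ^ 4 := by
  simp only [extremalFamily, eigenvecEF, Set.mem_insert_iff, Set.mem_singleton_iff]
  rintro q (rfl | rfl | rfl) i <;> fin_cases i <;>
    simp only [Fin.zero_eta, Fin.mk_one, Fin.reduceFinMk, cons_val] <;> nlinarith

theorem normSum_list_prod_le {l : List (Matrix (Fin 3) (Fin 3) ℝ)}
    (hl : ∀ T ∈ l, T = matE ∨ T = matF) : normSum l.prod ≤ 3 * r ^ 4 * r ^ l.length := by
  have hnn := list_prod_nonneg fun T hT => nonneg_of_mem_matE_matF T (hl T hT)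
  obtain ⟨q, hq, hlq⟩ := exists_list_prod_mulVec_le (by linarith) nonneg_of_mem_matE_matF
    (extremalFamily_step hr hr3) hl (v := eigenvecEF r) (by simp [extremalFamily])
  have hrow (i : Fin 3) : (l.prod *ᵥ eigenvecEF r) i ≤ r ^ l.length * r ^ 4 :=
    (hlq i).trans (mul_le_mul_of_nonneg_left
      (le_pow_four_of_mem_extremalFamily hr hr3 q hq i) (by positivity))
  rw [normSum_eq_sum_of_nonneg hnn]
  refine (sum_entries_le_of_mulVec_le hnn (one_le_eigenvecEF hr) hrow).trans_eq ?_
  simp only [Fintype.card_fin]; push_cast; ring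

theorem le_of_mem_productNormRoots {n : ℕ} (hn : n ≠ 0) :
    ∀ x ∈ productNormRoots n, x ≤ (3 * r ^ 4) ^ ((1 : ℝ) / n) * r := by
  rintro x ⟨l, rfl, hl, rfl⟩
  rw [← Real.mul_pow_rpow_one_div (by positivity) (by linarith) hn]
  exact Real.rpow_le_rpow (normSum_nonneg _) (normSum_list_prod_le hr hr3 hl) (by positivity)

theorem le_sSup_productNormRoots {k : ℕ} (hk : k ≠ 0) : r ≤ sSup (productNormRoots (2 * k)) := by
  have hbdd : BddAbove (productNormRoots (2 * k)) :=
    ⟨_, le_of_mem_productNormRoots hr hr3 (by omega)⟩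
  have hmem : normSum ((matE * matF) ^ k) ^ ((1 : ℝ) / (2 * k : ℕ)) ∈ productNormRoots (2 * k) :=
    ⟨alternatingList k, alternatingList_length k, mem_alternatingList, by
      rw [alternatingList_prod]⟩
  refine le_trans ?_ (le_csSup hbdd hmem)
  calc r = (r ^ (2 * k)) ^ ((1 : ℝ) / (2 * k : ℕ)) := by
        rw [one_div, Real.pow_rpow_inv_natCast (by linarith) (by omega)]
    _ ≤ _ := Real.rpow_le_rpow (by positivity) (pow_le_normSum_matE_mul_matF_pow hr k)
        (by positivity)

theorem limsup_sSup_productNormRoots :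
    limsup (fun n => sSup (productNormRoots n)) atTop = r := by
  have hb : Tendsto (fun n : ℕ => (3 * r ^ 4) ^ ((1 : ℝ) / n) * r) atTop (𝓝 r) := by
    simpa using (Real.tendsto_const_rpow_one_div_natCast (by positivity)).mul_const r
  refine limsup_eq_of_eventually_le_of_frequently_ge hb ?_ ?_ ?_
  · filter_upwards [eventually_ne_atTop 0] with n hn
    exact Real.sSup_le (le_of_mem_productNormRoots hr hr3 hn) (by positivity)
  · exact frequently_atTop.2 fun a =>
      ⟨2 * (a + 1), by omega, le_sSup_productNormRoots hr hr3 (by omega)⟩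
  · exact isBoundedUnder_of ⟨0, fun n => Real.sSup_nonneg nonneg_of_mem_productNormRoots⟩

end

theorem matF_mul_matE : matF * matE = !![6, 0, 4; 6, 0, 4; 6, 0, 3] := by
  simp only [matF, matE, mul_fin_three]; norm_num

theorem det_algebraMap_sub_matF_mul_matE (z : ℝ) :
    (algebraMap ℝ (Matrix (Fin 3) (Fin 3) ℝ) z - matF * matE).det = z * (z ^ 2 - 9 * z - 6) := by
  have hM : algebraMap ℝ _ z - matF * matE = !![z - 6, 0, -4; -6, z, -4; -6, 0, z - 3] := by
    rw [matF_mul_matE, Algebra.algebraMap_eq_smul_one]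
    ext i j; fin_cases i <;> fin_cases j <;> simp [one_apply]
  rw [hM, det_fin_three]
  simp only [of_apply, cons_val_zero, cons_val_one, cons_val_two, head_cons, tail_cons]
  ring

theorem mem_spectrum_matF_mul_matE {z : ℝ} :
    z ∈ spectrum ℝ (matF * matE) ↔ z * (z ^ 2 - 9 * z - 6) = 0 := by
  rw [spectrum.mem_iff, isUnit_iff_isUnit_det, isUnit_iff_ne_zero, not_not,
    det_algebraMap_sub_matF_mul_matE]

theorem spectralRadius_matF_mul_matE {ρ : ℝ} (hρ : ρ ^ 2 = 9 * ρ + 6) (hρ9 : 9 ≤ ρ) :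
    spectralRadius ℝ (matF * matE) = ENNReal.ofReal ρ := by
  have habs : ∀ z ∈ spectrum ℝ (matF * matE), |z| ≤ ρ := by
    intro z hz
    have hroots : z * ((z - ρ) * (z - (9 - ρ))) = 0 := by
      linear_combination mem_spectrum_matF_mul_matE.1 hz - z * hρ
    rcases mul_eq_zero.1 hroots with rfl | h
    · rw [abs_zero]; linarith
    rcases mul_eq_zero.1 h with h | h <;> rw [abs_le] <;> constructor <;> linarith
  have hρmem : ρ ∈ spectrum ℝ (matF * matE) :=
    mem_spectrum_matF_mul_matE.2 (by linear_combination ρ * hρ)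
  apply le_antisymm
  · refine iSup₂_le fun z hz => ?_
    rw [← enorm_eq_nnnorm, Real.enorm_eq_ofReal_abs]
    exact ENNReal.ofReal_le_ofReal (habs z hz)
  · rw [← Real.enorm_eq_ofReal (by linarith), enorm_eq_nnnorm]
    exact le_iSup₂ (f := fun k _ => (‖k‖₊ : ENNReal)) ρ hρmem

/-- The joint spectral radius of `{E, F}`, namely
`limsup_{n→∞} max{‖T₁T₂⋯Tₙ‖^{1/n} : Tᵢ ∈ {E,F}}`, equals `√((9 + √105)/2)`, the square
root of the spectral radius of the product `FE`. -/
theorem jointSpectralRadius_EF :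
    Filter.limsup (fun n : ℕ =>
        sSup {x : ℝ | ∃ l : List (Matrix (Fin 3) (Fin 3) ℝ), l.length = n ∧
          (∀ T ∈ l, T = matE ∨ T = matF) ∧ x = normSum l.prod ^ ((1 : ℝ) / n)})
        Filter.atTop = Real.sqrt ((9 + Real.sqrt 105) / 2) ∧
      spectralRadius ℝ (matF * matE) = ENNReal.ofReal ((9 + Real.sqrt 105) / 2) := by
  have h105 : √105 ^ 2 = 105 := Real.sq_sqrt (by norm_num)
  have h9 : 9 ≤ √105 := Real.le_sqrt_of_sq_le (by norm_num)
  set ρ := (9 + √105) / 2 with hρ_def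
  have hρ : ρ ^ 2 = 9 * ρ + 6 := by rw [hρ_def]; linear_combination h105 / 4
  have hρ9 : 9 ≤ ρ := by rw [hρ_def]; linarith
  have hr : √ρ ^ 2 = ρ := Real.sq_sqrt (by linarith)
  have hr4 : √ρ ^ 4 = 9 * √ρ ^ 2 + 6 := by
    linear_combination hρ + (√ρ ^ 2 + ρ - 9) * hr
  have hr3 : 3 ≤ √ρ := Real.le_sqrt_of_sq_le (by linarith)
  exact ⟨limsup_sSup_productNormRoots hr4 hr3, spectralRadius_matF_mul_matE hρ hρ9⟩
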